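/- arXiv:1311.1259 — 4 statements merged into one kernel-verified Lean document; each statement's English description precedes it below -/
import Mathlib

section
/- Let A be an M × N matrix satisfying the restricted isometry property of order K+1 with constant δ < 1 and having unit-norm columns. Then for any support S with |S| ≤ K and any column index j ∉ S, the incoherence parameter γ := ‖A_{S^c}ᵀ A_S (A_Sᵀ A_S)^{−1}‖_∞ satisfies γ ≤ √K·δ/(1−δ), where ‖·‖_∞ is the maximum absolute row sum matrix norm. -/
/-!
Fix `j ∉ S` and write `a` for the `j`-th column of `A`, `B = A_S` and `G = Bᵀ B`. Row `j` of
`A_{Sᶜ}ᵀ A_S G⁻¹` is the vector `w` solving the normal equations `G w = Bᵀ a`, so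
`‖B w‖² = ⟪a, B w⟫`. RIP on `S` gives `(1 - δ) ‖w‖² ≤ ‖B w‖²`, while RIP on `S ∪ {j}`, by
polarization, gives `|⟪a, B w⟫| ≤ δ ‖w‖`. Hence `‖w‖₂ ≤ δ / (1 - δ)`, and Cauchy–Schwarz
turns this into `‖w‖₁ ≤ √|S| · δ / (1 - δ)`.
-/

open Matrix Finset

section

variable {R m ι : Type*} [Fintype m] [Fintype ι]

lemma sum_sq_eq_dotProduct_self [Semiring R] (x : ι → R) : ∑ i, x i ^ 2 = x ⬝ᵥ x := by
  simp only [dotProduct, sq]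

lemma dotProduct_self_nonneg [Ring R] [LinearOrder R] [IsStrictOrderedRing R] (v : ι → R) :
    0 ≤ v ⬝ᵥ v :=
  Fintype.sum_nonneg fun i => mul_self_nonneg (v i)

lemma dotProduct_mulVec_self_eq_gram [CommSemiring R] (B : Matrix m ι R) (v : ι → R) :
    B *ᵥ v ⬝ᵥ B *ᵥ v = v ⬝ᵥ (Bᵀ * B) *ᵥ v := by
  rw [← mulVec_mulVec, dotProduct_mulVec v Bᵀ, vecMul_transpose]

lemma dotProduct_mulVec_self_eq_of_normal_eq [CommSemiring R] {B : Matrix m ι R} {a : m → R}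
    {w : ι → R} (hw : (Bᵀ * B) *ᵥ w = Bᵀ *ᵥ a) : B *ᵥ w ⬝ᵥ B *ᵥ w = a ⬝ᵥ B *ᵥ w := by
  rw [dotProduct_mulVec_self_eq_gram, hw, dotProduct_mulVec, vecMul_transpose, dotProduct_comm]

lemma gram_mulVec_mul_inv_row [CommRing R] [DecidableEq ι] {κ : Type*} (B : Matrix m ι R)
    (hB : IsUnit (Bᵀ * B).det) (X : Matrix κ ι R) (j : κ) :
    (Bᵀ * B) *ᵥ (X * (Bᵀ * B)⁻¹) j = X j := by
  rw [← vecMul_transpose, transpose_mul, transpose_transpose, ← mul_apply_eq_vecMul,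
    Matrix.mul_assoc, nonsing_inv_mul _ hB, Matrix.mul_one]

def Matrix.IsNearIsometry (B : Matrix m ι ℝ) (δ : ℝ) : Prop :=
  ∀ v, (1 - δ) * (v ⬝ᵥ v) ≤ B *ᵥ v ⬝ᵥ B *ᵥ v ∧ B *ᵥ v ⬝ᵥ B *ᵥ v ≤ (1 + δ) * (v ⬝ᵥ v)

lemma Matrix.IsNearIsometry.isUnit_det_gram [DecidableEq ι] {B : Matrix m ι ℝ} {δ : ℝ}
    (hB : B.IsNearIsometry δ) (hδ : δ < 1) : IsUnit (Bᵀ * B).det := by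
  refine isUnit_iff_ne_zero.2 fun hdet => ?_
  obtain ⟨v, hv, hBv⟩ := exists_mulVec_eq_zero_iff.2 hdet
  have hpos : 0 < v ⬝ᵥ v :=
    (dotProduct_self_nonneg v).lt_of_ne (Ne.symm (dotProduct_self_eq_zero.not.2 hv))
  have hlow := (hB v).1
  rw [dotProduct_mulVec_self_eq_gram, hBv, dotProduct_zero] at hlow
  nlinarith

/-- Polarization: the RIP bounds of `[a | B]` at `(t, v)` and `(t, -v)` differ by `4 t ⟪a, B v⟫`,
so `δ t² - 2 ⟪a, B v⟫ t + δ ‖v‖² ≥ 0` for every `t`. -/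
lemma sq_dotProduct_mulVec_le {a : m → ℝ} {B : Matrix m ι ℝ} {δ : ℝ}
    (h : ∀ (t : ℝ) v, (1 - δ) * (t ^ 2 + v ⬝ᵥ v) ≤ (t • a + B *ᵥ v) ⬝ᵥ (t • a + B *ᵥ v) ∧
      (t • a + B *ᵥ v) ⬝ᵥ (t • a + B *ᵥ v) ≤ (1 + δ) * (t ^ 2 + v ⬝ᵥ v)) (v : ι → ℝ) :
    (a ⬝ᵥ B *ᵥ v) ^ 2 ≤ δ ^ 2 * (v ⬝ᵥ v) := by
  have hquad : ∀ t, 0 ≤ δ * (t * t) + (-2 * (a ⬝ᵥ B *ᵥ v)) * t + δ * (v ⬝ᵥ v) := by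
    intro t
    have hup := (h t v).2
    have hlo := (h t (-v)).1
    simp only [mulVec_neg, dotProduct_add, add_dotProduct, dotProduct_neg, neg_dotProduct,
      dotProduct_smul, smul_dotProduct, smul_eq_mul, dotProduct_comm (B *ᵥ v) a] at hup hlo
    nlinarith
  have hdiscrim := discrim_le_zero hquad
  rw [discrim] at hdiscrim
  nlinarith

lemma sq_one_sub_mul_dotProduct_self_le {B : Matrix m ι ℝ} {δ : ℝ} (hB : B.IsNearIsometry δ)
    (hδ : δ < 1) {a : m → ℝ} {w : ι → ℝ} (hw : (Bᵀ * B) *ᵥ w = Bᵀ *ᵥ a)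
    (hcross : (a ⬝ᵥ B *ᵥ w) ^ 2 ≤ δ ^ 2 * (w ⬝ᵥ w)) :
    (1 - δ) ^ 2 * (w ⬝ᵥ w) ≤ δ ^ 2 := by
  have hlow := (hB w).1
  rw [dotProduct_mulVec_self_eq_of_normal_eq hw] at hlow
  rcases (dotProduct_self_nonneg w).eq_or_lt with hzero | hpos
  · rw [← hzero, mul_zero]; positivity
  · have : ((1 - δ) * (w ⬝ᵥ w)) ^ 2 ≤ δ ^ 2 * (w ⬝ᵥ w) :=
      (pow_le_pow_left₀ (by nlinarith) hlow 2).trans hcross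
    nlinarith

lemma sum_abs_le_sqrt_mul_div {w : ι → ℝ} {K : ℕ} {δ : ℝ} (hcard : Fintype.card ι ≤ K)
    (hδ0 : 0 ≤ δ) (hδ : δ < 1) (hw : (1 - δ) ^ 2 * (w ⬝ᵥ w) ≤ δ ^ 2) :
    ∑ i, |w i| ≤ Real.sqrt K * δ / (1 - δ) := by
  have hw' : w ⬝ᵥ w ≤ (δ / (1 - δ)) ^ 2 := by
    rw [div_pow, le_div_iff₀ (by nlinarith)]; linarith
  have hsq : (∑ i, |w i|) ^ 2 ≤ K * (δ / (1 - δ)) ^ 2 := calc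
    (∑ i, |w i|) ^ 2 ≤ Fintype.card ι * ∑ i, |w i| ^ 2 := sq_sum_le_card_mul_sum_sq
    _ = Fintype.card ι * (w ⬝ᵥ w) := by simp only [sq_abs, sum_sq_eq_dotProduct_self]
    _ ≤ K * (δ / (1 - δ)) ^ 2 := by gcongr; exact dotProduct_self_nonneg w
  rw [mul_div_assoc, ← Real.sqrt_sq (by bound : 0 ≤ δ / (1 - δ)), ← Real.sqrt_mul (by positivity)]
  exact Real.le_sqrt_of_sq_le hsq

end

section

variable {m n : Type*} [Fintype m] [DecidableEq n] {S : Finset n} {j : n}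

lemma sum_coe_insert {M : Type*} [AddCommMonoid M] {f : n → M} (hj : j ∉ S) :
    ∑ k : ↥(insert j S), f k = f j + ∑ k : ↥S, f k := by
  rw [sum_coe_sort, sum_coe_sort, sum_insert hj]

lemma sq_col_dotProduct_submatrix_mulVec_le {A : Matrix m n ℝ} {δ : ℝ} (hj : j ∉ S)
    (hA : (A.submatrix id (Subtype.val : ↥(insert j S) → n)).IsNearIsometry δ) (v : ↥S → ℝ) :
    (Aᵀ j ⬝ᵥ A.submatrix id Subtype.val *ᵥ v) ^ 2 ≤ δ ^ 2 * (v ⬝ᵥ v) := by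
  refine sq_dotProduct_mulVec_le (fun t v => ?_) v
  set g : n → ℝ := fun k => if h : k ∈ S then v ⟨k, h⟩ else t
  have hgj : g j = t := dif_neg hj
  have hgS : ∀ k : ↥S, g k = v k := fun k => dif_pos k.2
  have hnorm : (fun k : ↥(insert j S) => g k) ⬝ᵥ (fun k => g k) = t ^ 2 + v ⬝ᵥ v := by
    simp only [dotProduct, sum_coe_insert (f := fun k => g k * g k) hj, hgj, hgS, sq]
  have hmul : A.submatrix id (Subtype.val : ↥(insert j S) → n) *ᵥ (fun k => g k) =
      t • Aᵀ j + A.submatrix id Subtype.val *ᵥ v := by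
    ext i
    simp only [mulVec, dotProduct, submatrix_apply, id,
      sum_coe_insert (f := fun k => A i k * g k) hj, hgj, hgS, Pi.add_apply, Pi.smul_apply,
      transpose_apply, smul_eq_mul, mul_comm t]
  simpa only [hnorm, hmul] using hA fun k => g k

end

theorem rip_incoherence_bound_general
    (Mdim N K : ℕ) (A : Matrix (Fin Mdim) (Fin N) ℝ) (δ : ℝ) (hδ0 : 0 ≤ δ) (hδ : δ < 1)
    (hRIP : ∀ T : Finset (Fin N), T.card ≤ K + 1 → ∀ v : {x // x ∈ T} → ℝ,
      (1 - δ) * (∑ i, (v i) ^ 2) ≤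
          ∑ m, ((A.submatrix id (Subtype.val : {x // x ∈ T} → Fin N)).mulVec v m) ^ 2 ∧
        ∑ m, ((A.submatrix id (Subtype.val : {x // x ∈ T} → Fin N)).mulVec v m) ^ 2 ≤
          (1 + δ) * (∑ i, (v i) ^ 2))
    (S : Finset (Fin N)) (hS : S.card ≤ K)
    (AS : Matrix (Fin Mdim) {x // x ∈ S} ℝ)
    (hAS : AS = A.submatrix id (Subtype.val : {x // x ∈ S} → Fin N))
    (ASc : Matrix (Fin Mdim) {x // x ∈ Sᶜ} ℝ)
    (hASc : ASc = A.submatrix id (Subtype.val : {x // x ∈ Sᶜ} → Fin N))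
    (γ : ℝ)
    (hγ : γ = ⨆ j : {x // x ∈ Sᶜ}, ∑ i : {x // x ∈ S}, |(AScᵀ * AS * (ASᵀ * AS)⁻¹) j i|) :
    γ ≤ Real.sqrt K * δ / (1 - δ) := by
  have hnear : ∀ T : Finset (Fin N), T.card ≤ K + 1 →
      (A.submatrix id (Subtype.val : ↥T → Fin N)).IsNearIsometry δ := fun T hT v => by
    simpa only [sum_sq_eq_dotProduct_self] using hRIP T hT v
  have hAS_near : AS.IsNearIsometry δ := hAS ▸ hnear S (by omega)
  refine hγ ▸ Real.iSup_le (fun j => ?_) (by bound)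
  have hj : (j : Fin N) ∉ S := mem_compl.1 j.2
  set w := (AScᵀ * AS * (ASᵀ * AS)⁻¹) j
  have hw : (ASᵀ * AS) *ᵥ w = ASᵀ *ᵥ Aᵀ j := by
    rw [gram_mulVec_mul_inv_row AS (hAS_near.isUnit_det_gram hδ), mul_apply_eq_vecMul,
      ← mulVec_transpose, hASc]
    rfl
  have hcross : (Aᵀ j ⬝ᵥ AS *ᵥ w) ^ 2 ≤ δ ^ 2 * (w ⬝ᵥ w) := hAS ▸
    sq_col_dotProduct_submatrix_mulVec_le hj
      (hnear _ (by rw [card_insert_of_notMem hj]; omega)) w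
  exact sum_abs_le_sqrt_mul_div (by simpa using hS) hδ0 hδ
    (sq_one_sub_mul_dotProduct_self_le hAS_near hδ hw hcross)

/-- RIP of order `K+1` with constant `δ < 1` and unit-norm columns imply that the incoherence
parameter `γ = ‖A_{Sᶜ}ᵀ A_S (A_Sᵀ A_S)⁻¹‖_∞` (maximum absolute row sum) satisfies
`γ ≤ √K * δ / (1 - δ)` for any support `S` with `|S| ≤ K`. -/
theorem rip_incoherence_bound
    (Mdim N K : ℕ) (A : Matrix (Fin Mdim) (Fin N) ℝ) (δ : ℝ) (hδ0 : 0 ≤ δ) (hδ : δ < 1)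
    (hcols : ∀ j, ∑ i, (A i j) ^ 2 = 1)
    (hRIP : ∀ T : Finset (Fin N), T.card ≤ K + 1 → ∀ v : {x // x ∈ T} → ℝ,
      (1 - δ) * (∑ i, (v i) ^ 2) ≤
          ∑ m, ((A.submatrix id (Subtype.val : {x // x ∈ T} → Fin N)).mulVec v m) ^ 2 ∧
        ∑ m, ((A.submatrix id (Subtype.val : {x // x ∈ T} → Fin N)).mulVec v m) ^ 2 ≤
          (1 + δ) * (∑ i, (v i) ^ 2))
    (S : Finset (Fin N)) (hS : S.card ≤ K)
    (AS : Matrix (Fin Mdim) {x // x ∈ S} ℝ)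
    (hAS : AS = A.submatrix id (Subtype.val : {x // x ∈ S} → Fin N))
    (ASc : Matrix (Fin Mdim) {x // x ∈ Sᶜ} ℝ)
    (hASc : ASc = A.submatrix id (Subtype.val : {x // x ∈ Sᶜ} → Fin N))
    (γ : ℝ)
    (hγ : γ = ⨆ j : {x // x ∈ Sᶜ}, ∑ i : {x // x ∈ S}, |(AScᵀ * AS * (ASᵀ * AS)⁻¹) j i|) :
    γ ≤ Real.sqrt K * δ / (1 - δ) :=
  rip_incoherence_bound_general Mdim N K A δ hδ0 hδ hRIP S hS AS hAS ASc hASc γ hγ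
end

section
/- Suppose y = A x* + e with x* supported on S, A_Sᵀ A_S invertible, and suppose there exists a vector x̂ supported on S satisfying the LASSO KKT conditions with the strict dual feasibility condition ‖A_{S^c}ᵀ(y − A x̂)‖_∞ < h. Then every LASSO minimizer x with parameter h has support contained in S, i.e., x(j) = 0 for all j ∈ S^c. -/
/-!
Let `F` be the LASSO objective and `c = Aᵀ (y - A x̂)`. Expanding the square around `x̂` and
using `cᵢ x̂ᵢ = h |x̂ᵢ|` (the KKT equalities) gives, for every `x`,
`F x = F x̂ + ½ ‖A (x - x̂)‖² + ∑ⱼ (h |xⱼ| - cⱼ xⱼ)`,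
where every summand is nonnegative because `|cⱼ| ≤ h`. If `x` is a minimizer then `F x ≤ F x̂`,
so `cⱼ xⱼ = h |xⱼ|` for every `j`; when `|cⱼ| < h` this forces `xⱼ = 0`.
-/

open Matrix Finset

theorem Real.sign_mul_self_eq_abs (r : ℝ) : Real.sign r * r = |r| := by
  rcases lt_trichotomy r 0 with hr | rfl | hr
  · rw [Real.sign_of_neg hr, abs_of_neg hr, neg_one_mul]
  · simp
  · rw [Real.sign_of_pos hr, abs_of_pos hr, one_mul]

theorem mul_eq_mul_abs_of_eq_mul_sign {c h x : ℝ} (hc : x ≠ 0 → c = h * Real.sign x) :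
    c * x = h * |x| := by
  by_cases hx : x = 0
  · simp [hx]
  · rw [hc hx, mul_assoc, Real.sign_mul_self_eq_abs]

theorem mul_le_mul_abs_of_abs_le {c h : ℝ} (hch : |c| ≤ h) (x : ℝ) : c * x ≤ h * |x| :=
  calc c * x ≤ |c * x| := le_abs_self _
    _ = |c| * |x| := abs_mul c x
    _ ≤ h * |x| := mul_le_mul_of_nonneg_right hch (abs_nonneg x)

theorem mul_lt_mul_abs_of_abs_lt {c h x : ℝ} (hch : |c| < h) (hx : x ≠ 0) : c * x < h * |x| :=
  calc c * x ≤ |c| * |x| := by rw [← abs_mul]; exact le_abs_self _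
    _ < h * |x| := mul_lt_mul_of_pos_right hch (abs_pos.mpr hx)

namespace Matrix

variable {m n : Type*} [Fintype m] [Fintype n]

theorem sum_sq_sub_mulVec (A : Matrix m n ℝ) (y : m → ℝ) (x x₀ : n → ℝ) :
    ∑ i, (y i - (A *ᵥ x) i) ^ 2 =
      ∑ i, (y i - (A *ᵥ x₀) i) ^ 2 - 2 * ((Aᵀ *ᵥ (y - A *ᵥ x₀)) ⬝ᵥ (x - x₀)) +
        ∑ i, ((A *ᵥ (x - x₀)) i) ^ 2 := by
  set r := y - A *ᵥ x₀
  have hres : y - A *ᵥ x = r - A *ᵥ (x - x₀) := by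
    rw [mulVec_sub, sub_sub_sub_cancel_right]
  have hcross : (Aᵀ *ᵥ r) ⬝ᵥ (x - x₀) = r ⬝ᵥ (A *ᵥ (x - x₀)) := by
    rw [mulVec_transpose, dotProduct_mulVec]
  calc ∑ i, (y i - (A *ᵥ x) i) ^ 2 = ∑ i, ((y - A *ᵥ x) i) ^ 2 := rfl
    _ = ∑ i, (r i ^ 2 - 2 * (r i * (A *ᵥ (x - x₀)) i) + ((A *ᵥ (x - x₀)) i) ^ 2) := by
      rw [hres]; exact sum_congr rfl fun i _ => by simp only [Pi.sub_apply]; ring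
    _ = _ := by
      rw [hcross, sum_add_distrib, sum_sub_distrib, ← mul_sum]; rfl

end Matrix

section Lasso

variable {m n : Type*} [Fintype m] [Fintype n]

noncomputable def lassoObjective (A : Matrix m n ℝ) (y : m → ℝ) (h : ℝ) (x : n → ℝ) : ℝ :=
  1 / 2 * ∑ i, (y i - (A *ᵥ x) i) ^ 2 + h * ∑ j, |x j|

variable {A : Matrix m n ℝ} {y : m → ℝ} {h : ℝ} {x₀ : n → ℝ}

theorem lassoObjective_eq_add_of_kkt
    (hkkt : ∀ j, (Aᵀ *ᵥ (y - A *ᵥ x₀)) j * x₀ j = h * |x₀ j|) (x : n → ℝ) :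
    lassoObjective A y h x = lassoObjective A y h x₀ + 1 / 2 * ∑ i, ((A *ᵥ (x - x₀)) i) ^ 2 +
      ∑ j, (h * |x j| - (Aᵀ *ᵥ (y - A *ᵥ x₀)) j * x j) := by
  set c := Aᵀ *ᵥ (y - A *ᵥ x₀)
  have hcross : c ⬝ᵥ (x - x₀) = ∑ j, c j * x j - h * ∑ j, |x₀ j| := by
    simp only [dotProduct, Pi.sub_apply, mul_sub, sum_sub_distrib, hkkt, ← mul_sum]
  rw [lassoObjective, lassoObjective, sum_sq_sub_mulVec A y x x₀, hcross, sum_sub_distrib,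
    ← mul_sum]
  ring

theorem mul_eq_mul_abs_of_lassoObjective_le
    (hkkt : ∀ j, (Aᵀ *ᵥ (y - A *ᵥ x₀)) j * x₀ j = h * |x₀ j|)
    (hdual : ∀ j, |(Aᵀ *ᵥ (y - A *ᵥ x₀)) j| ≤ h) {x : n → ℝ}
    (hx : lassoObjective A y h x ≤ lassoObjective A y h x₀) (j : n) :
    (Aᵀ *ᵥ (y - A *ᵥ x₀)) j * x j = h * |x j| := by
  set c := Aᵀ *ᵥ (y - A *ᵥ x₀)
  have hgap_nonneg : ∀ j, 0 ≤ h * |x j| - c j * x j := fun j =>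
    sub_nonneg.mpr (mul_le_mul_abs_of_abs_le (hdual j) (x j))
  have hquad_nonneg : 0 ≤ 1 / 2 * ∑ i, ((A *ᵥ (x - x₀)) i) ^ 2 := by positivity
  have hgap_sum : ∑ j, (h * |x j| - c j * x j) = 0 := by
    rw [lassoObjective_eq_add_of_kkt hkkt x] at hx
    exact le_antisymm (by linarith) (sum_nonneg fun j _ => hgap_nonneg j)
  have := (sum_eq_zero_iff_of_nonneg fun j _ => hgap_nonneg j).mp hgap_sum j (mem_univ j)
  linarith

end Lasso

theorem lasso_support_uniqueness_general
    (Mdim N : ℕ) (A : Matrix (Fin Mdim) (Fin N) ℝ) (h : ℝ)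
    (S : Finset (Fin N)) (y : Fin Mdim → ℝ) (xhat : Fin N → ℝ)
    (hKKT1 : ∀ i : Fin N, xhat i ≠ 0 →
      ∑ m, A m i * (y m - A.mulVec xhat m) = h * Real.sign (xhat i))
    (hKKT2 : ∀ i : Fin N, |∑ m, A m i * (y m - A.mulVec xhat m)| ≤ h)
    (hstrict : ∀ j, j ∉ S → |∑ m, A m j * (y m - A.mulVec xhat m)| < h) :
    ∀ x : Fin N → ℝ,
      (∀ z : Fin N → ℝ,
        (1 / 2) * (∑ m, (y m - A.mulVec x m) ^ 2) + h * ∑ j, |x j| ≤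
          (1 / 2) * (∑ m, (y m - A.mulVec z m) ^ 2) + h * ∑ j, |z j|) →
      ∀ j, j ∉ S → x j = 0 := by
  intro x hmin j hj
  by_contra hxj
  have hgap := mul_eq_mul_abs_of_lassoObjective_le
    (fun i => mul_eq_mul_abs_of_eq_mul_sign (hKKT1 i)) hKKT2 (hmin xhat) j
  exact (mul_lt_mul_abs_of_abs_lt (hstrict j hj) hxj).ne hgap

/-- Primal-dual witness uniqueness: if `y = A x* + e` with `x*` supported on `S`,
`A_Sᵀ A_S` invertible, and some `x̂` supported on `S` satisfies the LASSO KKT conditions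
with strict dual feasibility on `Sᶜ`, then every LASSO minimizer with parameter `h` is
supported in `S`. -/
theorem lasso_support_uniqueness
    (Mdim N : ℕ) (A : Matrix (Fin Mdim) (Fin N) ℝ) (h : ℝ) (hh : 0 < h)
    (S : Finset (Fin N)) (xstar : Fin N → ℝ) (ebar : Fin Mdim → ℝ)
    (y : Fin Mdim → ℝ) (hy : y = A.mulVec xstar + ebar)
    (hxstar : ∀ i, i ∉ S → xstar i = 0)
    (hGram : IsUnit ((A.submatrix id (Subtype.val : {x // x ∈ S} → Fin N))ᵀ *
      A.submatrix id (Subtype.val : {x // x ∈ S} → Fin N)))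
    (xhat : Fin N → ℝ)
    (hxhatS : ∀ j, j ∉ S → xhat j = 0)
    (hKKT1 : ∀ i : Fin N, xhat i ≠ 0 →
      ∑ m, A m i * (y m - A.mulVec xhat m) = h * Real.sign (xhat i))
    (hKKT2 : ∀ i : Fin N, |∑ m, A m i * (y m - A.mulVec xhat m)| ≤ h)
    (hstrict : ∀ j, j ∉ S → |∑ m, A m j * (y m - A.mulVec xhat m)| < h) :
    ∀ x : Fin N → ℝ,
      (∀ z : Fin N → ℝ,
        (1 / 2) * (∑ m, (y m - A.mulVec x m) ^ 2) + h * ∑ j, |x j| ≤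
          (1 / 2) * (∑ m, (y m - A.mulVec z m) ^ 2) + h * ∑ j, |z j|) →
      ∀ j, j ∉ S → x j = 0 :=
  lasso_support_uniqueness_general Mdim N A h S y xhat hKKT1 hKKT2 hstrict
end

section
/- Let y = A x* + e with x* supported on S, |S| = K, A_Sᵀ A_S invertible, and let γ := ‖A_{S^c}ᵀ A_S (A_Sᵀ A_S)^{−1}‖_∞ < 1. Define the oracle estimate x̂_S := (A_Sᵀ A_S)^{−1}(A_Sᵀ y − h z_S) for any sign vector z_S ∈ [−1,1]^K. Then for each j ∈ S^c, the dual variable a_jᵀ(y − A_S x̂_S) decomposes as a_jᵀ Π e + h·a_jᵀ A_S (A_Sᵀ A_S)^{−1} z_S, where Π := I − A_S(A_Sᵀ A_S)^{−1}A_Sᵀ is the orthogonal projector onto the orthogonal complement of the column span of A_S; in particular |a_jᵀ(y − A_S x̂_S)| ≤ |a_jᵀ Π e| + hγ. -/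
/-! Since `Π = I - A_S G⁻¹ A_Sᵀ` annihilates the columns of `A_S` and `A x* = A_S x*_S`, the residual
is `y - A_S x̂_S = Π y + h A_S G⁻¹ z = Π e + h A_S G⁻¹ z`. Pairing with `a_j` gives the decomposition,
and the second term is the `j`-th entry of `A_{Sᶜ}ᵀ A_S G⁻¹ z`, bounded by a row sum since `|zᵢ| ≤ 1`. -/

open Matrix Finset

namespace Matrix

variable {R : Type*} [CommRing R] {m n : Type*} [Fintype m] [Fintype n] [DecidableEq m]
  [DecidableEq n]

theorem one_sub_mul_gram_inv_mul_transpose_mul_self {B : Matrix m n R} (hB : IsUnit (Bᵀ * B)) :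
    (1 - B * (Bᵀ * B)⁻¹ * Bᵀ) * B = 0 := by
  have hinv : (Bᵀ * B)⁻¹ * (Bᵀ * B) = 1 :=
    nonsing_inv_mul _ ((isUnit_iff_isUnit_det _).mp hB)
  rw [Matrix.sub_mul, Matrix.one_mul, Matrix.mul_assoc, Matrix.mul_assoc, hinv, Matrix.mul_one,
    sub_self]

theorem sub_mulVec_gram_inv_mulVec (B : Matrix m n R) (y : m → R) (h : R) (z : n → R) :
    y - B *ᵥ ((Bᵀ * B)⁻¹ *ᵥ (Bᵀ *ᵥ y - h • z)) =
      (1 - B * (Bᵀ * B)⁻¹ * Bᵀ) *ᵥ y + h • B *ᵥ ((Bᵀ * B)⁻¹ *ᵥ z) := by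
  simp only [mulVec_sub, mulVec_smul, sub_mulVec, one_mulVec, mulVec_mulVec, Matrix.mul_assoc]
  abel

theorem one_sub_mul_gram_inv_mul_transpose_mulVec_add {B : Matrix m n R} (hB : IsUnit (Bᵀ * B))
    (u : n → R) (e : m → R) :
    (1 - B * (Bᵀ * B)⁻¹ * Bᵀ) *ᵥ (B *ᵥ u + e) = (1 - B * (Bᵀ * B)⁻¹ * Bᵀ) *ᵥ e := by
  rw [mulVec_add, mulVec_mulVec, one_sub_mul_gram_inv_mul_transpose_mul_self hB, zero_mulVec,
    zero_add]

end Matrix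

theorem Matrix.mulVec_eq_submatrix_mulVec_of_support {R : Type*} [NonUnitalNonAssocSemiring R]
    {m n : Type*} [Fintype n] (A : Matrix m n R) (S : Finset n) {x : n → R}
    (hx : ∀ i, i ∉ S → x i = 0) :
    A *ᵥ x = A.submatrix id ((↑) : S → n) *ᵥ fun i => x i := by
  ext k
  simp only [mulVec, dotProduct, submatrix_apply, id_eq]
  rw [Finset.sum_coe_sort S fun i => A k i * x i]
  exact (Finset.sum_subset (Finset.subset_univ S) fun i _ hi => by rw [hx i hi, mul_zero]).symm

theorem Matrix.abs_mulVec_le_sum_abs {m n : Type*} [Fintype n] (C : Matrix m n ℝ) {z : n → ℝ}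
    (hz : ∀ k, |z k| ≤ 1) (i : m) :
    |(C *ᵥ z) i| ≤ ∑ k, |C i k| :=
  calc |∑ k, C i k * z k| ≤ ∑ k, |C i k * z k| := abs_sum_le_sum_abs _ _
    _ ≤ ∑ k, |C i k| := sum_le_sum fun k _ => by
        rw [abs_mul]; exact mul_le_of_le_one_right (abs_nonneg _) (hz k)

theorem Matrix.abs_mulVec_le_iSup_sum_abs {m n : Type*} [Finite m] [Fintype n] (C : Matrix m n ℝ)
    {z : n → ℝ} (hz : ∀ k, |z k| ≤ 1) (i : m) :
    |(C *ᵥ z) i| ≤ ⨆ i, ∑ k, |C i k| :=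
  (C.abs_mulVec_le_sum_abs hz i).trans <|
    le_ciSup (f := fun i => ∑ k, |C i k|) (Set.finite_range _).bddAbove i

/-- Dual-variable decomposition in the primal-dual witness construction: with
`y = A x* + e`, `x*` supported on `S`, `G = A_Sᵀ A_S` invertible, sign vector
`z ∈ [-1,1]^S` and oracle estimate `x̂_S = G⁻¹ (A_Sᵀ y - h z)`, for each `j ∉ S` the dual
variable decomposes as `a_jᵀ(y - A_S x̂_S) = a_jᵀ Π e + h * a_jᵀ A_S G⁻¹ z`, where
`Π = I - A_S G⁻¹ A_Sᵀ`; in particular `|a_jᵀ(y - A_S x̂_S)| ≤ |a_jᵀ Π e| + h * γ` with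
`γ` the maximum absolute row sum of `A_{Sᶜ}ᵀ A_S G⁻¹`. -/
theorem lasso_dual_decomposition
    (Mdim N : ℕ) (A : Matrix (Fin Mdim) (Fin N) ℝ) (h : ℝ) (hh : 0 ≤ h)
    (S : Finset (Fin N)) (xstar : Fin N → ℝ) (e : Fin Mdim → ℝ)
    (y : Fin Mdim → ℝ) (hy : y = A.mulVec xstar + e)
    (hxstar : ∀ i, i ∉ S → xstar i = 0)
    (AS : Matrix (Fin Mdim) {x // x ∈ S} ℝ)
    (hAS : AS = A.submatrix id (Subtype.val : {x // x ∈ S} → Fin N))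
    (hGram : IsUnit (ASᵀ * AS))
    (z : {x // x ∈ S} → ℝ) (hz : ∀ i, |z i| ≤ 1)
    (xhatS : {x // x ∈ S} → ℝ)
    (hxhatS : xhatS = (ASᵀ * AS)⁻¹.mulVec (ASᵀ.mulVec y - h • z))
    (Pr : Matrix (Fin Mdim) (Fin Mdim) ℝ)
    (hPr : Pr = 1 - AS * (ASᵀ * AS)⁻¹ * ASᵀ)
    (γ : ℝ)
    (hγ : γ = ⨆ j : {x // x ∈ Sᶜ},
      ∑ i : {x // x ∈ S},
        |((A.submatrix id (Subtype.val : {x // x ∈ Sᶜ} → Fin N))ᵀ * AS * (ASᵀ * AS)⁻¹) j i|) :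
    ∀ j : Fin N, j ∉ S →
      (∑ m, A m j * (y m - AS.mulVec xhatS m) =
        ∑ m, A m j * Pr.mulVec e m +
          h * ∑ m, A m j * AS.mulVec ((ASᵀ * AS)⁻¹.mulVec z) m) ∧
      |∑ m, A m j * (y m - AS.mulVec xhatS m)| ≤ |∑ m, A m j * Pr.mulVec e m| + h * γ := by
  intro j hj
  have hresidual : y - AS *ᵥ xhatS = Pr *ᵥ e + h • AS *ᵥ ((ASᵀ * AS)⁻¹ *ᵥ z) := by
    rw [hxhatS, sub_mulVec_gram_inv_mulVec, hPr, hy,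
      A.mulVec_eq_submatrix_mulVec_of_support S hxstar, ← hAS,
      one_sub_mul_gram_inv_mul_transpose_mulVec_add hGram]
  have hdecomp : ∑ m, A m j * (y m - AS.mulVec xhatS m) =
      ∑ m, A m j * Pr.mulVec e m + h * ∑ m, A m j * AS.mulVec ((ASᵀ * AS)⁻¹.mulVec z) m := by
    change (fun m => A m j) ⬝ᵥ (y - AS *ᵥ xhatS) = _
    rw [hresidual, dotProduct_add, dotProduct_smul, smul_eq_mul]
    rfl
  have hdual_bound : |∑ m, A m j * AS.mulVec ((ASᵀ * AS)⁻¹.mulVec z) m| ≤ γ := by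
    have := abs_mulVec_le_iSup_sum_abs
      ((A.submatrix id (Subtype.val : {x // x ∈ Sᶜ} → Fin N))ᵀ * AS * (ASᵀ * AS)⁻¹) hz
      ⟨j, mem_compl.mpr hj⟩
    rwa [← mulVec_mulVec, ← mulVec_mulVec, ← hγ] at this
  refine ⟨hdecomp, ?_⟩
  rw [hdecomp]
  calc _ ≤ |_| + |h * _| := abs_add_le _ _
    _ ≤ _ := by rw [abs_mul, abs_of_nonneg hh]; gcongr
end

section
/- If a matrix A satisfies ‖A_{S^c}ᵀ A_S(A_Sᵀ A_S)^{−1}‖_∞ = 0 (i.e., every column outside S is orthogonal to the column span of A_S) and A_Sᵀ A_S is invertible, then for noise-free measurements y = A x* with x* supported on S, any LASSO solution with h > 0 is supported in S. -/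
/-!
Restricting a candidate `x` to `S` splits the residual as `y - A x = A (x* - x_S) - A x_{Sᶜ}`.
The first term lies in the column span of `A_S`, the second in that of `A_{Sᶜ}`, so by
orthogonality the restriction does not increase the quadratic loss, while it strictly decreases
the `ℓ₁` penalty as soon as `x` has a nonzero entry outside `S`. Since `h > 0`, a minimizer
cannot have such an entry.
-/

open Matrix Finset

theorem sum_sq_le_sum_sq_sub {ι R : Type*} [Fintype ι] [CommRing R] [LinearOrder R]
    [IsStrictOrderedRing R] (a b : ι → R) (hab : ∑ i, a i * b i = 0) :
    ∑ i, a i ^ 2 ≤ ∑ i, (a i - b i) ^ 2 := by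
  have hexpand : ∑ i, (a i - b i) ^ 2 = ∑ i, a i ^ 2 - 2 * ∑ i, a i * b i + ∑ i, b i ^ 2 := by
    simp only [sub_sq, sum_add_distrib, sum_sub_distrib, mul_sum, mul_assoc]
  rw [hexpand, hab]
  linarith [sum_nonneg fun i (_ : i ∈ univ) => sq_nonneg (b i)]

theorem mulVec_dotProduct_mulVec_eq_zero_of_orthogonal {m n R : Type*} [Fintype m] [Fintype n]
    [CommSemiring R] (A : Matrix m n R) (S : Finset n)
    (horth : ∀ j, j ∉ S → ∀ i, i ∈ S → ∑ k, A k j * A k i = 0)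
    (u v : n → R) (hu : ∀ i, i ∉ S → u i = 0) (hv : ∀ j, j ∈ S → v j = 0) :
    (A *ᵥ u) ⬝ᵥ (A *ᵥ v) = 0 := by
  have hterm : ∀ i j, u i * v j * ∑ k, A k j * A k i = 0 := by
    intro i j
    by_cases hi : i ∈ S
    · by_cases hj : j ∈ S
      · rw [hv j hj, mul_zero, zero_mul]
      · rw [horth j hj i hi, mul_zero]
    · rw [hu i hi, zero_mul, zero_mul]
  calc (A *ᵥ u) ⬝ᵥ (A *ᵥ v) = ∑ k, ∑ i, ∑ j, u i * v j * (A k j * A k i) := by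
        simp only [dotProduct, mulVec, sum_mul_sum]
        exact sum_congr rfl fun k _ => sum_congr rfl fun i _ => sum_congr rfl fun j _ => by ring
    _ = ∑ i, ∑ j, u i * v j * ∑ k, A k j * A k i := by
        rw [sum_comm]
        refine sum_congr rfl fun i _ => ?_
        rw [sum_comm]
        simp only [mul_sum]
    _ = 0 := sum_eq_zero fun i _ => sum_eq_zero fun j _ => hterm i j

theorem sum_sq_sub_mulVec_indicator_le {m n R : Type*} [Fintype m] [Fintype n] [CommRing R]
    [LinearOrder R] [IsStrictOrderedRing R] (A : Matrix m n R) (S : Finset n)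
    (horth : ∀ j, j ∉ S → ∀ i, i ∈ S → ∑ k, A k j * A k i = 0)
    (xstar : n → R) (hxstar : ∀ i, i ∉ S → xstar i = 0) (x : n → R) :
    ∑ k, ((A *ᵥ xstar) k - (A *ᵥ (S : Set n).indicator x) k) ^ 2 ≤
      ∑ k, ((A *ᵥ xstar) k - (A *ᵥ x) k) ^ 2 := by
  set xS := (S : Set n).indicator x
  have horth' : (A *ᵥ (xstar - xS)) ⬝ᵥ (A *ᵥ (x - xS)) = 0 := by
    refine mulVec_dotProduct_mulVec_eq_zero_of_orthogonal A S horth _ _ (fun i hi => ?_)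
      (fun j hj => ?_)
    · simp [xS, hxstar i hi, hi]
    · simp [xS, hj]
  have hresidual : ∀ k, (A *ᵥ xstar) k - (A *ᵥ x) k =
      (A *ᵥ (xstar - xS)) k - (A *ᵥ (x - xS)) k := by
    intro k
    simp only [mulVec_sub, Pi.sub_apply]
    ring
  have hfit : ∀ k, (A *ᵥ xstar) k - (A *ᵥ xS) k = (A *ᵥ (xstar - xS)) k := by
    simp only [mulVec_sub, Pi.sub_apply, implies_true]
  simp only [hfit, hresidual]
  exact sum_sq_le_sum_sq_sub _ _ horth'

theorem sum_abs_indicator_lt_sum_abs {n R : Type*} [Fintype n] [AddCommGroup R] [LinearOrder R]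
    [IsOrderedAddMonoid R] (s : Set n) (x : n → R) {j : n} (hj : j ∉ s) (hxj : x j ≠ 0) :
    ∑ i, |s.indicator x i| < ∑ i, |x i| := by
  refine sum_lt_sum (fun i _ => ?_) ⟨j, mem_univ j, ?_⟩
  · by_cases hi : i ∈ s <;> simp [hi]
  · simpa [hj] using hxj

theorem lasso_orthogonal_noise_free_general
    (Mdim N : ℕ) (A : Matrix (Fin Mdim) (Fin N) ℝ) (h : ℝ) (hh : 0 < h)
    (S : Finset (Fin N)) (xstar : Fin N → ℝ) (hxstar : ∀ i, i ∉ S → xstar i = 0)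
    (horth : ∀ j, j ∉ S → ∀ i, i ∈ S → ∑ m, A m j * A m i = 0)
    (y : Fin Mdim → ℝ) (hy : y = A.mulVec xstar) :
    ∀ x : Fin N → ℝ,
      (∀ z : Fin N → ℝ,
        (1 / 2) * (∑ m, (y m - A.mulVec x m) ^ 2) + h * ∑ j, |x j| ≤
          (1 / 2) * (∑ m, (y m - A.mulVec z m) ^ 2) + h * ∑ j, |z j|) →
      ∀ j, j ∉ S → x j = 0 := by
  intro x hmin j hj
  by_contra hxj
  subst hy
  have hloss := sum_sq_sub_mulVec_indicator_le A S horth xstar hxstar x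
  have hpenalty := sum_abs_indicator_lt_sum_abs (S : Set (Fin N)) x (by simpa using hj) hxj
  have hopt := hmin ((S : Set (Fin N)).indicator x)
  linarith [mul_lt_mul_of_pos_left hpenalty hh]

/-- Orthogonal special case (`γ = 0`, `e = 0`) of the no-false-alarm theorem: if every column
of `A` outside `S` is orthogonal to the columns of `A_S`, `A_Sᵀ A_S` is invertible, and
`y = A x*` is noise-free with `x*` supported on `S`, then any LASSO minimizer with `h > 0`
is supported in `S`. -/
theorem lasso_orthogonal_noise_free
    (Mdim N : ℕ) (A : Matrix (Fin Mdim) (Fin N) ℝ) (h : ℝ) (hh : 0 < h)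
    (S : Finset (Fin N)) (xstar : Fin N → ℝ) (hxstar : ∀ i, i ∉ S → xstar i = 0)
    (horth : ∀ j, j ∉ S → ∀ i, i ∈ S → ∑ m, A m j * A m i = 0)
    (hGram : IsUnit ((A.submatrix id (Subtype.val : {x // x ∈ S} → Fin N))ᵀ *
      A.submatrix id (Subtype.val : {x // x ∈ S} → Fin N)))
    (y : Fin Mdim → ℝ) (hy : y = A.mulVec xstar) :
    ∀ x : Fin N → ℝ,
      (∀ z : Fin N → ℝ,
        (1 / 2) * (∑ m, (y m - A.mulVec x m) ^ 2) + h * ∑ j, |x j| ≤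
          (1 / 2) * (∑ m, (y m - A.mulVec z m) ^ 2) + h * ∑ j, |z j|) →
      ∀ j, j ∉ S → x j = 0 :=
  lasso_orthogonal_noise_free_general Mdim N A h hh S xstar hxstar horth y hy
end
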